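/- For all natural numbers n ≥ 1, the sum over k from 1 to n of k²·H_k·H_{n-k} equals n(n+1)(2n+1)/6 · [H_{n+1}² - H^{(2)}_{n+1} - (13n+5)/(3(2n+1))·H_{n+1} + (71n+37)/(18(2n+1))]. -/

import Mathlib

open Finset BigOperators

/-!
Write `S n = ∑_{i+j=n} i² H_i H_j`. Since `H_{j+1} = H_j + 1/(j+1)`, the difference
`S (n+1) - S n` is `∑_{i+j=n} i² H_i/(j+1)`, and expanding `i² = ((n+1) - (j+1))²` reduces it to
the classical sums `∑ H_i`, `∑ i H_i` and the convolution `∑_{i+j=n} H_i/(j+1) = H_{n+1}² - H^{(2)}_{n+1}`.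
The convolution telescopes the same way, using
`1/((i+1)(j+1)) = (1/(i+1) + 1/(j+1))/(n+2)` on the antidiagonal `i + j = n`.
-/

def H (n : ℕ) : ℚ := ∑ i ∈ Finset.range n, 1 / (i + 1 : ℚ)

def H2 (n : ℕ) : ℚ := ∑ i ∈ Finset.range n, 1 / ((i + 1 : ℚ))^2

@[simp]
lemma H_zero : H 0 = 0 := rfl

lemma H_succ (n : ℕ) : H (n + 1) = H n + 1 / (n + 1 : ℚ) := by
  simp [H, sum_range_succ]

lemma H2_succ (n : ℕ) : H2 (n + 1) = H2 n + 1 / ((n + 1 : ℚ))^2 := by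
  simp [H2, sum_range_succ]

lemma sum_range_succ_H (n : ℕ) :
    ∑ i ∈ range (n + 1), H i = (n + 1) * H (n + 1) - (n + 1) := by
  induction n with
  | zero => simp [H]
  | succ n ih =>
    rw [sum_range_succ, ih, H_succ (n + 1)]
    push_cast
    field_simp
    ring

lemma sum_range_succ_mul_H (n : ℕ) :
    ∑ i ∈ range (n + 1), (i : ℚ) * H i = n * (n + 1) / 2 * H (n + 1) - n * (n + 1) / 4 := by
  induction n with
  | zero => simp
  | succ n ih =>
    rw [sum_range_succ, ih, H_succ (n + 1)]
    push_cast
    field_simp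
    ring

lemma sum_antidiagonal_inv_mul_inv (n : ℕ) :
    ∑ p ∈ antidiagonal n, 1 / ((p.1 + 1 : ℚ) * (p.2 + 1)) = 2 * H (n + 1) / (n + 2) := by
  have partial_fractions : ∀ p ∈ antidiagonal n, 1 / ((p.1 + 1 : ℚ) * (p.2 + 1))
      = (1 / (p.1 + 1 : ℚ) + 1 / (p.2 + 1 : ℚ)) / (n + 2) := by
    intro p hp
    have hsum : (p.1 : ℚ) + p.2 = n := by exact_mod_cast mem_antidiagonal.mp hp
    rw [← hsum]
    field_simp
    ring
  have hH : ∑ p ∈ antidiagonal n, 1 / (p.1 + 1 : ℚ) = H (n + 1) := by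
    rw [Nat.sum_antidiagonal_eq_sum_range_succ_mk]
    simp [H]
  have hH' : ∑ p ∈ antidiagonal n, 1 / (p.2 + 1 : ℚ) = H (n + 1) :=
    hH ▸ Nat.sum_antidiagonal_swap (f := fun p => 1 / (p.1 + 1 : ℚ))
  rw [sum_congr rfl partial_fractions, ← sum_div, sum_add_distrib, hH, hH']
  ring

lemma sum_antidiagonal_H_div (n : ℕ) :
    ∑ p ∈ antidiagonal n, H p.1 / (p.2 + 1) = H (n + 1) ^ 2 - H2 (n + 1) := by
  induction n with
  | zero => simp [H, H2]
  | succ n ih =>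
    have step : ∑ p ∈ antidiagonal n, H (p.1 + 1) / (p.2 + 1)
        = ∑ p ∈ antidiagonal n, H p.1 / (p.2 + 1)
          + ∑ p ∈ antidiagonal n, 1 / ((p.1 + 1 : ℚ) * (p.2 + 1)) := by
      rw [← sum_add_distrib]
      refine sum_congr rfl fun p _ => ?_
      rw [H_succ]
      field_simp
    rw [Nat.sum_antidiagonal_succ, H_zero, zero_div, zero_add, step, ih, sum_antidiagonal_inv_mul_inv,
      H_succ (n + 1), H2_succ (n + 1)]
    push_cast
    field_simp
    ring

lemma sum_antidiagonal_sq_mul_H_div (n : ℕ) :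
    ∑ p ∈ antidiagonal n, (p.1 : ℚ) ^ 2 * H p.1 / (p.2 + 1)
      = (n + 1) ^ 2 * (H (n + 1) ^ 2 - H2 (n + 1))
        - (n + 1) * ((n + 1) * H (n + 1) - (n + 1))
        - (n * (n + 1) / 2 * H (n + 1) - n * (n + 1) / 4) := by
  have expand : ∀ p ∈ antidiagonal n, (p.1 : ℚ) ^ 2 * H p.1 / (p.2 + 1)
      = (n + 1) ^ 2 * (H p.1 / (p.2 + 1)) - (n + 1) * H p.1 - p.1 * H p.1 := by
    intro p hp
    have hsum : (p.1 : ℚ) + p.2 = n := by exact_mod_cast mem_antidiagonal.mp hp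
    rw [← hsum]
    field_simp
    ring
  rw [sum_congr rfl expand, sum_sub_distrib, sum_sub_distrib, ← mul_sum, ← mul_sum,
    sum_antidiagonal_H_div,
    Nat.sum_antidiagonal_eq_sum_range_succ_mk (fun p => H p.1),
    Nat.sum_antidiagonal_eq_sum_range_succ_mk (fun p => (p.1 : ℚ) * H p.1),
    sum_range_succ_H, sum_range_succ_mul_H]

lemma sum_antidiagonal_sq_mul_H_mul_H (n : ℕ) :
    ∑ p ∈ antidiagonal n, (p.1 : ℚ) ^ 2 * H p.1 * H p.2
      = n * (n + 1) * (2 * n + 1) / 6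
          * (H (n + 1) ^ 2 - H2 (n + 1)
            - (13 * n + 5) / (3 * (2 * n + 1)) * H (n + 1)
            + (71 * n + 37) / (18 * (2 * n + 1))) := by
  induction n with
  | zero => simp
  | succ n ih =>
    have step : ∑ p ∈ antidiagonal n, (p.1 : ℚ) ^ 2 * H p.1 * H (p.2 + 1)
        = ∑ p ∈ antidiagonal n, (p.1 : ℚ) ^ 2 * H p.1 * H p.2
          + ∑ p ∈ antidiagonal n, (p.1 : ℚ) ^ 2 * H p.1 / (p.2 + 1) := by
      rw [← sum_add_distrib]
      refine sum_congr rfl fun p _ => ?_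
      rw [H_succ]
      field_simp
    rw [Nat.sum_antidiagonal_succ', H_zero, mul_zero, zero_add, step, ih,
      sum_antidiagonal_sq_mul_H_div, H_succ (n + 1), H2_succ (n + 1)]
    push_cast
    field_simp
    ring

theorem stmt10_general (n : ℕ) :
    ∑ k ∈ Finset.Icc 1 n, (k : ℚ)^2 * H k * H (n - k)
      = n * (n + 1) * (2 * n + 1) / 6
          * (H (n + 1)^2 - H2 (n + 1)
            - (13 * n + 5) / (3 * (2 * n + 1)) * H (n + 1)
            + (71 * n + 37) / (18 * (2 * n + 1))) := by
  rw [← sum_antidiagonal_sq_mul_H_mul_H,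
    Nat.sum_antidiagonal_eq_sum_range_succ (fun i j => (i : ℚ) ^ 2 * H i * H j),
    sum_range_eq_add_Ico _ n.succ_pos, Nat.succ_eq_add_one, Ico_add_one_right_eq_Icc]
  simp

theorem stmt10 (n : ℕ) (hn : 1 ≤ n) :
    ∑ k ∈ Finset.Icc 1 n, (k : ℚ)^2 * H k * H (n - k)
      = n * (n + 1) * (2 * n + 1) / 6
          * (H (n + 1)^2 - H2 (n + 1)
            - (13 * n + 5) / (3 * (2 * n + 1)) * H (n + 1)
            + (71 * n + 37) / (18 * (2 * n + 1))) :=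
  stmt10_general n
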